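/- Reduction correctness for #SAT: let n ≥ 1, let φ : (Fin n → Bool) → Bool, and let r be a real number with |r - (H_n * D_φ * H_n) 0ⁿ 0ⁿ| < 1 / 2^n. Then |#φ - 2^(n-1) * (1 - r)| < 1/2, so the number of satisfying assignments #φ equals the nearest integer to 2^(n-1) * (1 - r). -/

import Mathlib

open Finset

/-- The `n`-qubit Walsh–Hadamard matrix. -/
noncomputable def walshHadamard (n : ℕ) : Matrix (Fin n → Bool) (Fin n → Bool) ℝ :=
  fun x y =>
    (-1 : ℝ) ^ (Finset.univ.filter (fun i : Fin n => x i = true ∧ y i = true)).card /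
      Real.sqrt (2 ^ n)

/-- The phase-oracle matrix of `φ`. -/
def phaseOracle (n : ℕ) (φ : (Fin n → Bool) → Bool) :
    Matrix (Fin n → Bool) (Fin n → Bool) ℝ :=
  Matrix.diagonal (fun x => (-1 : ℝ) ^ (if φ x then 1 else 0))

/-! The row and column of `H_n` at `0ⁿ` are constant, so the `(0ⁿ, 0ⁿ)` entry of `H_n D H_n` is
the mean of the diagonal of `D`. For the phase oracle that mean is `1 - 2 #φ / 2^n`; multiplying
the error bound `1 / 2^n` by `2^(n-1)` gives `1/2`, and an integer within `1/2` of a real number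
is its rounding. -/

theorem round_eq_of_abs_sub_lt_half {α : Type*} [Field α] [LinearOrder α] [IsStrictOrderedRing α]
    [FloorRing α] {x : α} {n : ℤ} (h : |(n : α) - x| < 1 / 2) : round x = n := by
  obtain ⟨hlo, hhi⟩ := abs_lt.mp h
  exact round_eq_iff.mpr ⟨by linarith, by linarith⟩

theorem sum_neg_one_pow_ite {α : Type*} [Fintype α] (p : α → Bool) :
    ∑ x, (-1 : ℝ) ^ (if p x then 1 else 0) =
      Fintype.card α - 2 * Fintype.card {x // p x = true} := by
  have hsign : ∀ x, (-1 : ℝ) ^ (if p x then 1 else 0) = 1 - 2 * if p x then 1 else 0 := by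
    intro x
    cases p x <;> norm_num
  simp only [hsign, sum_sub_distrib, ← mul_sum, sum_boole, sum_const, card_univ, nsmul_eq_mul,
    mul_one, Fintype.card_subtype]

theorem walshHadamard_apply_zero_right (n : ℕ) (x : Fin n → Bool) :
    walshHadamard n x (fun _ => false) = 1 / Real.sqrt (2 ^ n) := by
  simp [walshHadamard]

theorem walshHadamard_apply_zero_left (n : ℕ) (y : Fin n → Bool) :
    walshHadamard n (fun _ => false) y = 1 / Real.sqrt (2 ^ n) := by
  simp [walshHadamard]

theorem walshHadamard_mul_diagonal_mul_walshHadamard_apply_zero (n : ℕ)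
    (d : (Fin n → Bool) → ℝ) :
    (walshHadamard n * Matrix.diagonal d * walshHadamard n) (fun _ => false) (fun _ => false) =
      (∑ x, d x) / 2 ^ n := by
  simp only [Matrix.mul_apply, walshHadamard_apply_zero_left, walshHadamard_apply_zero_right,
    Matrix.diagonal_apply, mul_ite, mul_zero, sum_ite_eq', mem_univ, if_true]
  rw [← sum_mul, ← mul_sum]
  field_simp
  rw [Real.sq_sqrt (by positivity)]

theorem walshHadamard_mul_phaseOracle_mul_walshHadamard_apply_zero (n : ℕ)
    (φ : (Fin n → Bool) → Bool) :
    (walshHadamard n * phaseOracle n φ * walshHadamard n) (fun _ => false) (fun _ => false) =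
      1 - 2 * Fintype.card {x // φ x = true} / 2 ^ n := by
  rw [phaseOracle, walshHadamard_mul_diagonal_mul_walshHadamard_apply_zero, sum_neg_one_pow_ite]
  simp only [Fintype.card_fun, Fintype.card_bool, Fintype.card_fin, Nat.cast_pow, Nat.cast_ofNat]
  field_simp

/-- Reduction correctness for `#SAT`: if `r` approximates the `(0ⁿ, 0ⁿ)` entry
of `H_n * D_φ * H_n` to within `1/2^n`, then the number of satisfying
assignments `#φ` is within `1/2` of `2^(n-1) * (1 - r)`, hence equals its
nearest integer. -/
theorem sharpSAT_reduction_correct (n : ℕ) (hn : 1 ≤ n)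
    (φ : (Fin n → Bool) → Bool) (r : ℝ)
    (h : |r - (walshHadamard n * phaseOracle n φ * walshHadamard n)
        (fun _ => false) (fun _ => false)| < 1 / 2 ^ n) :
    |(Fintype.card {x : Fin n → Bool // φ x = true} : ℝ) -
        2 ^ (n - 1) * (1 - r)| < 1 / 2 ∧
      (Fintype.card {x : Fin n → Bool // φ x = true} : ℤ) =
        round (2 ^ (n - 1) * (1 - r) : ℝ) := by
  rw [walshHadamard_mul_phaseOracle_mul_walshHadamard_apply_zero] at h
  set k : ℝ := (Fintype.card {x : Fin n → Bool // φ x = true} : ℝ)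
  have hpow : (2 : ℝ) ^ n = 2 ^ (n - 1) * 2 := by rw [← pow_succ, Nat.sub_add_cancel hn]
  have hdiff : k - 2 ^ (n - 1) * (1 - r) = 2 ^ (n - 1) * (r - (1 - 2 * k / 2 ^ n)) := by
    rw [hpow]
    field_simp
    ring
  have hclose : |k - 2 ^ (n - 1) * (1 - r)| < 1 / 2 := calc
    |k - 2 ^ (n - 1) * (1 - r)| = 2 ^ (n - 1) * |r - (1 - 2 * k / 2 ^ n)| := by
      rw [hdiff, abs_mul, abs_of_pos (by positivity)]
    _ < 2 ^ (n - 1) * (1 / 2 ^ n) := by gcongr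
    _ = 1 / 2 := by
      rw [hpow]
      field_simp
  exact ⟨hclose, (round_eq_of_abs_sub_lt_half (by exact_mod_cast hclose)).symm⟩
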